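/- arXiv:2110.07781 — 2 statements merged into one kernel-verified Lean document; each statement's English description precedes it below -/
import Mathlib

section
/- For every real δ > 0 there exists a constant C (depending only on δ) such that for every integer n ≥ 1, the explicit product state ψ_n satisfies χ_δ(ψ_n) ≤ C. -/
open scoped BigOperators Classical

noncomputable section

namespace StabPaper

/-- The space `𝔽₂ⁿ` of length-`n` bitstrings. -/
abbrev F2 (n : ℕ) := Fin n → ZMod 2

/-- `A ⊆ 𝔽₂ⁿ` is a (nonempty) affine linear subspace. -/
def IsAffineSubspace {n : ℕ} (A : Set (F2 n)) : Prop :=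
  A.Nonempty ∧ ∀ x ∈ A, ∀ y ∈ A, ∀ z ∈ A, x + y + z ∈ A

/-- `l : 𝔽₂ⁿ → 𝔽₂` is a linear form. -/
def IsLinearForm {n : ℕ} (l : F2 n → ZMod 2) : Prop :=
  ∀ x y, l (x + y) = l x + l y

/-- `q : 𝔽₂ⁿ → 𝔽₂` is a quadratic form (polynomial of degree at most 2
with vanishing constant term). -/
def IsQuadraticForm {n : ℕ} (q : F2 n → ZMod 2) : Prop :=
  q 0 = 0 ∧ ∀ x y z, q (x + y + z) = q (x + y) + q (x + z) + q (y + z) + q x + q y + q z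

/-- A stabilizer state vector on `n` qubits. -/
def IsStabilizerState {n : ℕ} (σ : F2 n → ℂ) : Prop :=
  ∃ (A : Set (F2 n)) (l q : F2 n → ZMod 2),
    IsAffineSubspace A ∧ IsLinearForm l ∧ IsQuadraticForm q ∧
    ∀ x, σ x = if x ∈ A then Complex.I ^ (l x).val * (-1 : ℂ) ^ (q x).val else 0

/-- A real stabilizer state vector on `n` qubits (the case `l = 0`). -/
def IsRealStabilizerState {n : ℕ} (σ : F2 n → ℂ) : Prop :=
  ∃ (A : Set (F2 n)) (q : F2 n → ZMod 2),
    IsAffineSubspace A ∧ IsQuadraticForm q ∧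
    ∀ x, σ x = if x ∈ A then (-1 : ℂ) ^ (q x).val else 0

/-- The stabilizer rank: the least `r` such that `ψ` is a `ℂ`-linear combination of
`r` stabilizer state vectors. -/
def stabRank {n : ℕ} (ψ : F2 n → ℂ) : ℕ :=
  sInf {r : ℕ | ∃ (c : Fin r → ℂ) (σ : Fin r → (F2 n → ℂ)),
    (∀ i, IsStabilizerState (σ i)) ∧ ψ = ∑ i, c i • σ i}

/-- The real stabilizer rank: the least `r` such that `ψ` is a `ℂ`-linear combination of
`r` real stabilizer state vectors. -/
def realStabRank {n : ℕ} (ψ : F2 n → ℂ) : ℕ :=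
  sInf {r : ℕ | ∃ (c : Fin r → ℂ) (σ : Fin r → (F2 n → ℂ)),
    (∀ i, IsRealStabilizerState (σ i)) ∧ ψ = ∑ i, c i • σ i}

/-- The `n`-fold tensor power of a one-qubit vector `ψ : ℂ²`. -/
def tensorPow (ψ : ZMod 2 → ℂ) (n : ℕ) : F2 n → ℂ := fun x => ∏ i, ψ (x i)

/-- The Euclidean norm on `ℂ^{𝔽₂ⁿ}`. -/
def l2norm {n : ℕ} (φ : F2 n → ℂ) : ℝ := Real.sqrt (∑ x, ‖φ x‖ ^ 2)

/-- The δ-approximate stabilizer rank. -/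
def approxStabRank {n : ℕ} (δ : ℝ) (ψ : F2 n → ℂ) : ℕ :=
  sInf {r : ℕ | ∃ φ : F2 n → ℂ, φ ≠ 0 ∧
    l2norm (fun x => ((l2norm φ : ℝ) : ℂ)⁻¹ * φ x - ((l2norm ψ : ℝ) : ℂ)⁻¹ * ψ x) < δ ∧
    stabRank φ = r}

/-- The one-qubit vector `a·e₀ + b·e₁ ∈ ℂ²`. -/
def qubit (a b : ℂ) : ZMod 2 → ℂ := fun x => if x = 0 then a else b

/-- A nonzero `ψ ∈ ℂ²` is a one-qubit stabilizer state vector iff it is proportional to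
one of `e₀, e₁, e₀+e₁, e₀−e₁, e₀+i·e₁, e₀−i·e₁`. -/
def IsQubitStabVec (ψ : ZMod 2 → ℂ) : Prop :=
  ∃ c : ℂ, c ≠ 0 ∧ (ψ = c • qubit 1 0 ∨ ψ = c • qubit 0 1 ∨ ψ = c • qubit 1 1 ∨
    ψ = c • qubit 1 (-1) ∨ ψ = c • qubit 1 Complex.I ∨ ψ = c • qubit 1 (-Complex.I))

/-- The `n`-th generic stabilizer rank `χ_n`. -/
def genStabRank (n : ℕ) : ℕ :=
  sSup {r : ℕ | ∃ ψ : ZMod 2 → ℂ, ψ ≠ 0 ∧ stabRank (tensorPow ψ n) = r}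

/-- The `n`-th generic real stabilizer rank `χ_nℝ`. -/
def genRealStabRank (n : ℕ) : ℕ :=
  sSup {r : ℕ | ∃ ψ : ZMod 2 → ℂ, ψ ≠ 0 ∧ realStabRank (tensorPow ψ n) = r}


/-- The explicit product state `ψ_n = ⊗_{i=1}^n (e₀ + 2^{2^{i−1}} e₁)`,
i.e. `ψ_n(x) = 2^{Σ_{i=1}^n x_i·2^{i−1}}`. -/
def psiN (n : ℕ) : F2 n → ℂ :=
  fun x => (2 : ℂ) ^ (∑ i : Fin n, (x i).val * 2 ^ (i : ℕ))

/-! Writing `m(x) = ∑ xᵢ 2ⁱ`, we have `|ψₙ(x)|² = 4^{m(x)}`, so turning a zero bit `xᵢ` into a one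
multiplies `|ψₙ(x)|²` by `4^{2ⁱ}`: the strings with `xᵢ = 0` carry at most a `4^{-2ⁱ} ≤ 2^{-(i+1)}`
fraction of `‖ψₙ‖²`. By a union bound, the restriction `φ` of `ψₙ` to the at most `2ᵏ` strings
whose bits of index `≥ k` are all `1` misses at most a `2^{-k}` fraction of `‖ψₙ‖²`, uniformly in
`n`. Since `‖φ/‖φ‖ - ψ/‖ψ‖‖ ≤ 2‖ψ - φ‖/‖φ‖`, the normalized `φ` is `δ`-close to the normalized `ψₙ`
once `k` is large, and `φ`, having at most `2ᵏ` nonzero coordinates, is a combination of `2ᵏ`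
computational basis states. -/

theorem norm_inv_norm_smul_sub_le {𝕜 E : Type*} [RCLike 𝕜] [NormedAddCommGroup E]
    [NormedSpace 𝕜 E] (u : E) {v : E} (hv : v ≠ 0) :
    ‖(‖v‖⁻¹ : 𝕜) • v - (‖u‖⁻¹ : 𝕜) • u‖ ≤ 2 * ‖u - v‖ / ‖v‖ := by
  have hv' : 0 < ‖v‖ := norm_pos_iff.mpr hv
  have hscale : ‖((‖v‖⁻¹ : 𝕜) - (‖u‖⁻¹ : 𝕜)) • u‖ ≤ ‖u - v‖ / ‖v‖ := by
    rcases eq_or_ne u 0 with rfl | hu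
    · simpa using div_nonneg (norm_nonneg v) (norm_nonneg v)
    have hu' : 0 < ‖u‖ := norm_pos_iff.mpr hu
    rw [norm_smul, ← RCLike.ofReal_inv, ← RCLike.ofReal_inv, ← RCLike.ofReal_sub,
      RCLike.norm_ofReal, show ‖v‖⁻¹ - ‖u‖⁻¹ = (‖u‖ - ‖v‖) / (‖v‖ * ‖u‖) by field_simp, abs_div,
      abs_of_pos (mul_pos hv' hu'), div_mul_eq_mul_div, mul_div_mul_right _ _ hu'.ne']
    gcongr
    exact abs_norm_sub_norm_le u v
  calc ‖(‖v‖⁻¹ : 𝕜) • v - (‖u‖⁻¹ : 𝕜) • u‖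
      ≤ ‖(‖v‖⁻¹ : 𝕜) • (v - u)‖ + ‖((‖v‖⁻¹ : 𝕜) - (‖u‖⁻¹ : 𝕜)) • u‖ := by
        rw [smul_sub, sub_smul]
        exact norm_sub_le_norm_sub_add_norm_sub _ _ _
    _ ≤ ‖u - v‖ / ‖v‖ + ‖u - v‖ / ‖v‖ := by
        gcongr
        rw [norm_smul, norm_inv, RCLike.norm_ofReal, abs_norm, norm_sub_rev, inv_mul_eq_div]
    _ = 2 * ‖u - v‖ / ‖v‖ := by ring

theorem norm_inv_norm_smul_sub_lt {𝕜 E : Type*} [RCLike 𝕜] [NormedAddCommGroup E]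
    [NormedSpace 𝕜 E] {u v : E} {δ : ℝ} (hδ : 0 < δ)
    (h : 4 * ‖u - v‖ ^ 2 < δ ^ 2 * ‖v‖ ^ 2) :
    ‖(‖v‖⁻¹ : 𝕜) • v - (‖u‖⁻¹ : 𝕜) • u‖ < δ := by
  have hv : v ≠ 0 := by
    rintro rfl
    rw [norm_zero] at h
    nlinarith [sq_nonneg ‖u - 0‖]
  have hv' : 0 < ‖v‖ := norm_pos_iff.mpr hv
  refine (norm_inv_norm_smul_sub_le u hv).trans_lt ?_
  rw [div_lt_iff₀ hv']
  exact lt_of_pow_lt_pow_left₀ 2 (by positivity)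
    (by linarith [mul_pow 2 ‖u - v‖ 2, mul_pow δ ‖v‖ 2])

theorem sum_le_sum_sum_filter_of_forall_exists {α ι : Type*} [Fintype α] {f : α → ℝ}
    (hf : ∀ x, 0 ≤ f x) {S : Finset α} {I : Finset ι} {p : ι → α → Prop}
    [∀ i, DecidablePred (p i)] (h : ∀ x ∈ S, ∃ i ∈ I, p i x) :
    ∑ x ∈ S, f x ≤ ∑ i ∈ I, ∑ x ∈ Finset.univ.filter (p i), f x := by
  have hterm : ∀ x i, 0 ≤ if p i x then f x else 0 := fun x _ => ite_nonneg (hf x) le_rfl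
  calc ∑ x ∈ S, f x ≤ ∑ x ∈ S, ∑ i ∈ I, if p i x then f x else 0 := by
        refine Finset.sum_le_sum fun x hx => ?_
        obtain ⟨i, hi, hpi⟩ := h x hx
        calc f x = if p i x then f x else 0 := (if_pos hpi).symm
          _ ≤ _ := Finset.single_le_sum (fun j _ => hterm x j) hi
    _ ≤ ∑ x, ∑ i ∈ I, if p i x then f x else 0 :=
        Finset.sum_le_univ_sum_of_nonneg fun x => Finset.sum_nonneg fun i _ => hterm x i
    _ = ∑ i ∈ I, ∑ x ∈ Finset.univ.filter (p i), f x := by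
        rw [Finset.sum_comm]
        simp only [Finset.sum_filter]

theorem sum_half_pow_succ_filter_le (k n : ℕ) :
    ∑ i ∈ Finset.univ.filter (fun i : Fin n => k ≤ (i : ℕ)), (1 / 2 : ℝ) ^ ((i : ℕ) + 1)
      ≤ (1 / 2) ^ k := by
  calc ∑ i ∈ Finset.univ.filter (fun i : Fin n => k ≤ (i : ℕ)), (1 / 2 : ℝ) ^ ((i : ℕ) + 1)
      = ∑ j ∈ (Finset.univ.filter (fun i : Fin n => k ≤ (i : ℕ))).map Fin.valEmbedding,
          (1 / 2 : ℝ) ^ (j + 1) :=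
        (Finset.sum_map _ Fin.valEmbedding fun j => (1 / 2 : ℝ) ^ (j + 1)).symm
    _ ≤ ∑ j ∈ Finset.Ico k n, (1 / 2 : ℝ) ^ (j + 1) := by
        refine Finset.sum_le_sum_of_subset_of_nonneg ?_ fun _ _ _ => by positivity
        intro j hj
        obtain ⟨i, hi, rfl⟩ := Finset.mem_map.mp hj
        exact Finset.mem_Ico.mpr ⟨(Finset.mem_filter.mp hi).2, i.isLt⟩
    _ = (∑ j ∈ Finset.Ico k n, (1 / 2 : ℝ) ^ j) * (1 / 2) := by
        simp only [pow_succ, Finset.sum_mul]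
    _ ≤ (1 / 2) ^ k / (1 - 1 / 2) * (1 / 2) := by
        gcongr
        exact geom_sum_Ico_le_of_lt_one (by norm_num) (by norm_num)
    _ = (1 / 2) ^ k := by ring

theorem l2norm_eq_norm_toLp {n : ℕ} (f : F2 n → ℂ) :
    l2norm f = ‖(WithLp.toLp 2 f : EuclideanSpace ℂ (F2 n))‖ := by
  rw [EuclideanSpace.norm_eq]
  rfl

theorem l2norm_sq {n : ℕ} (f : F2 n → ℂ) : l2norm f ^ 2 = ∑ x, ‖f x‖ ^ 2 :=
  Real.sq_sqrt (by positivity)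

theorem l2norm_sq_indicator {n : ℕ} (f : F2 n → ℂ) (s : Finset (F2 n)) :
    l2norm ((s : Set (F2 n)).indicator f) ^ 2 = ∑ x ∈ s, ‖f x‖ ^ 2 := by
  simp only [l2norm_sq, Set.indicator_apply, Finset.mem_coe, apply_ite (‖·‖ ^ 2), norm_zero,
    ne_eq, OfNat.ofNat_ne_zero, not_false_eq_true, zero_pow]
  rw [Finset.sum_ite_mem, Finset.univ_inter]

theorem l2norm_normalize_sub_eq_norm {n : ℕ} (φ ψ : F2 n → ℂ) :
    l2norm (fun x => ((l2norm φ : ℝ) : ℂ)⁻¹ * φ x - ((l2norm ψ : ℝ) : ℂ)⁻¹ * ψ x) =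
      ‖(‖(WithLp.toLp 2 φ : EuclideanSpace ℂ (F2 n))‖⁻¹ : ℂ) • WithLp.toLp 2 φ -
        (‖(WithLp.toLp 2 ψ : EuclideanSpace ℂ (F2 n))‖⁻¹ : ℂ) • WithLp.toLp 2 ψ‖ := by
  rw [l2norm_eq_norm_toLp, l2norm_eq_norm_toLp φ, l2norm_eq_norm_toLp ψ]
  rfl

theorem approxStabRank_le_stabRank_indicator {n : ℕ} {δ ε : ℝ} (hδ : 0 < δ)
    {ψ : F2 n → ℂ} (hψ : ψ ≠ 0) (s : Finset (F2 n))
    (hs : ∑ x ∈ sᶜ, ‖ψ x‖ ^ 2 ≤ ε * ∑ x, ‖ψ x‖ ^ 2) (hε : ε * (4 + δ ^ 2) < δ ^ 2) :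
    approxStabRank δ ψ ≤ stabRank ((s : Set (F2 n)).indicator ψ) := by
  set φ := (s : Set (F2 n)).indicator ψ
  have hφ : l2norm φ ^ 2 = ∑ x ∈ s, ‖ψ x‖ ^ 2 := l2norm_sq_indicator ψ s
  have hψφ : l2norm (ψ - φ) ^ 2 = ∑ x ∈ sᶜ, ‖ψ x‖ ^ 2 := by
    rw [← Set.indicator_compl, ← Finset.coe_compl, l2norm_sq_indicator]
  have hsplit : ∑ x, ‖ψ x‖ ^ 2 = ∑ x ∈ s, ‖ψ x‖ ^ 2 + ∑ x ∈ sᶜ, ‖ψ x‖ ^ 2 :=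
    (Finset.sum_add_sum_compl s _).symm
  have hψpos : 0 < ∑ x, ‖ψ x‖ ^ 2 := by
    rw [← l2norm_sq, l2norm_eq_norm_toLp]
    have : WithLp.toLp 2 ψ ≠ (0 : EuclideanSpace ℂ (F2 n)) := by simpa using hψ
    positivity
  have hclose : 4 * l2norm (ψ - φ) ^ 2 < δ ^ 2 * l2norm φ ^ 2 := by
    rw [hψφ, hφ]
    nlinarith [mul_le_mul_of_nonneg_left hs (by positivity : (0 : ℝ) ≤ 4 + δ ^ 2),
      mul_lt_mul_of_pos_right hε hψpos]
  have hφ0 : φ ≠ 0 := by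
    rintro hφ0
    have hφnorm : l2norm φ = 0 := by simp [hφ0, l2norm]
    rw [hφnorm] at hclose
    nlinarith [sq_nonneg (l2norm (ψ - φ))]
  refine Nat.sInf_le ⟨φ, hφ0, ?_, rfl⟩
  rw [l2norm_normalize_sub_eq_norm]
  rw [l2norm_eq_norm_toLp, l2norm_eq_norm_toLp] at hclose
  exact norm_inv_norm_smul_sub_lt hδ hclose

theorem isStabilizerState_single {n : ℕ} (z : F2 n) : IsStabilizerState (Pi.single z (1 : ℂ)) := by
  refine ⟨{z}, 0, 0, ⟨Set.singleton_nonempty z, ?_⟩, fun _ _ => by simp,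
    ⟨rfl, fun _ _ _ => by simp⟩, fun x => ?_⟩
  · rintro x rfl y rfl w rfl
    simp [ZModModule.add_self]
  · by_cases hx : x = z <;> simp [hx]

theorem stabRank_le_of_eq_sum {n : ℕ} {ι : Type*} {ψ : F2 n → ℂ} (s : Finset ι) (c : ι → ℂ)
    (σ : ι → F2 n → ℂ) (hσ : ∀ i ∈ s, IsStabilizerState (σ i)) (hψ : ψ = ∑ i ∈ s, c i • σ i) :
    stabRank ψ ≤ s.card := by
  refine Nat.sInf_le ⟨fun j => c (s.equivFin.symm j), fun j => σ (s.equivFin.symm j),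
    fun j => hσ _ (s.equivFin.symm j).2, ?_⟩
  rw [hψ, ← Finset.sum_coe_sort s]
  exact (Equiv.sum_comp s.equivFin.symm (fun i => c i • σ i)).symm

theorem stabRank_le_card_support {n : ℕ} (ψ : F2 n → ℂ) :
    stabRank ψ ≤ (Finset.univ.filter fun x => ψ x ≠ 0).card := by
  refine stabRank_le_of_eq_sum _ ψ (fun z => Pi.single z 1)
    (fun z _ => isStabilizerState_single z) ?_
  rw [Finset.sum_filter_of_ne (p := fun x => ψ x ≠ 0) fun _ _ h hx => h (by rw [hx, zero_smul])]
  exact pi_eq_sum_univ' ψ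

theorem stabRank_indicator_le_card {n : ℕ} (ψ : F2 n → ℂ) (s : Finset (F2 n)) :
    stabRank ((s : Set (F2 n)).indicator ψ) ≤ s.card :=
  (stabRank_le_card_support _).trans <| Finset.card_le_card fun _ hx =>
    Set.mem_of_indicator_ne_zero (Finset.mem_filter.mp hx).2

def highBitsOne (k n : ℕ) : Finset (F2 n) :=
  Finset.univ.filter fun x => ∀ i : Fin n, k ≤ (i : ℕ) → x i = 1

theorem card_highBitsOne_le (k n : ℕ) : (highBitsOne k n).card ≤ 2 ^ k := by
  let lowBits : F2 n → ({i : Fin n // (i : ℕ) < k} → ZMod 2) := fun x i => x i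
  have hinj : Set.InjOn lowBits (highBitsOne k n) := by
    intro x hx y hy hxy
    funext i
    by_cases hi : (i : ℕ) < k
    · exact congrFun hxy ⟨i, hi⟩
    · rw [(Finset.mem_filter.mp hx).2 i (not_lt.mp hi),
        (Finset.mem_filter.mp hy).2 i (not_lt.mp hi)]
  calc (highBitsOne k n).card
      ≤ Fintype.card ({i : Fin n // (i : ℕ) < k} → ZMod 2) :=
        Finset.card_le_card_of_injOn lowBits (fun _ _ => Finset.mem_univ _) hinj
    _ = 2 ^ Fintype.card {i : Fin n // (i : ℕ) < k} := by simp
    _ ≤ 2 ^ k := Nat.pow_le_pow_right two_pos <|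
        (Fintype.card_le_of_injective (fun i => (⟨i.1.1, i.2⟩ : Fin k))
          fun _ _ h => Subtype.ext (Fin.ext (Fin.mk.inj_iff.mp h))).trans_eq (Fintype.card_fin k)

theorem psiN_add_single {n : ℕ} {x : F2 n} {i : Fin n} (hx : x i = 0) :
    psiN n (x + Pi.single i 1) = 2 ^ 2 ^ (i : ℕ) * psiN n x := by
  have hval : ∀ j,
      ((x + Pi.single i 1 : F2 n) j).val = (x j).val + (Pi.single i 1 : Fin n → ℕ) j := by
    intro j
    by_cases h : j = i
    · subst h
      simp [hx, ZMod.val_one]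
    · simp [h]
  simp only [psiN, ← pow_add, hval, add_mul, Finset.sum_add_distrib, Pi.single_apply, ite_mul,
    one_mul, zero_mul, Finset.sum_ite_eq', Finset.mem_univ, if_true, add_comm]

theorem four_pow_mul_sum_norm_sq_psiN_le (n : ℕ) (i : Fin n) :
    4 ^ 2 ^ (i : ℕ) * ∑ x ∈ Finset.univ.filter (fun x : F2 n => x i = 0), ‖psiN n x‖ ^ 2
      ≤ ∑ x, ‖psiN n x‖ ^ 2 := by
  let shift := (Equiv.addRight (Pi.single i 1 : F2 n)).toEmbedding
  calc 4 ^ 2 ^ (i : ℕ) * ∑ x ∈ Finset.univ.filter (fun x : F2 n => x i = 0), ‖psiN n x‖ ^ 2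
      = ∑ x ∈ Finset.univ.filter (fun x : F2 n => x i = 0), ‖psiN n (shift x)‖ ^ 2 := by
        rw [Finset.mul_sum]
        refine Finset.sum_congr rfl fun x hx => ?_
        rw [Equiv.coe_toEmbedding, Equiv.coe_addRight, psiN_add_single (Finset.mem_filter.mp hx).2,
          norm_mul, mul_pow, norm_pow, Complex.norm_two, ← pow_mul, mul_comm (2 ^ (i : ℕ)),
          pow_mul]
        norm_num
    _ = ∑ y ∈ (Finset.univ.filter (fun x : F2 n => x i = 0)).map shift, ‖psiN n y‖ ^ 2 :=
        (Finset.sum_map _ shift fun y => ‖psiN n y‖ ^ 2).symm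
    _ ≤ ∑ x, ‖psiN n x‖ ^ 2 := Finset.sum_le_univ_sum_of_nonneg fun _ => by positivity

theorem sum_norm_sq_psiN_compl_highBitsOne_le (k n : ℕ) :
    ∑ x ∈ (highBitsOne k n)ᶜ, ‖psiN n x‖ ^ 2 ≤ (1 / 2) ^ k * ∑ x, ‖psiN n x‖ ^ 2 := by
  set W := ∑ x, ‖psiN n x‖ ^ 2
  have hcover : ∀ x ∈ (highBitsOne k n)ᶜ,
      ∃ i ∈ Finset.univ.filter (fun i : Fin n => k ≤ (i : ℕ)), x i = 0 := by
    intro x hx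
    simp only [highBitsOne, Finset.mem_compl, Finset.mem_filter, Finset.mem_univ, true_and,
      not_forall] at hx
    obtain ⟨i, hi, hxi⟩ := hx
    exact ⟨i, Finset.mem_filter.mpr ⟨Finset.mem_univ _, hi⟩,
      (by decide : ∀ a : ZMod 2, a ≠ 1 → a = 0) _ hxi⟩
  have hbit : ∀ i : Fin n, ∑ x ∈ Finset.univ.filter (fun x : F2 n => x i = 0), ‖psiN n x‖ ^ 2
      ≤ (1 / 2) ^ ((i : ℕ) + 1) * W := by
    intro i
    have hpow : (2 : ℝ) ^ ((i : ℕ) + 1) ≤ 4 ^ 2 ^ (i : ℕ) := by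
      rw [show (4 : ℝ) = 2 ^ 2 by norm_num, ← pow_mul, ← pow_succ']
      exact pow_le_pow_right₀ one_le_two (Nat.lt_two_pow_self).le
    rw [one_div_pow, one_div_mul_eq_div, le_div_iff₀ (by positivity)]
    nlinarith [four_pow_mul_sum_norm_sq_psiN_le n i,
      Finset.sum_nonneg fun x (_ : x ∈ Finset.univ.filter (fun x : F2 n => x i = 0)) =>
        sq_nonneg ‖psiN n x‖]
  calc ∑ x ∈ (highBitsOne k n)ᶜ, ‖psiN n x‖ ^ 2
      ≤ ∑ i ∈ Finset.univ.filter (fun i : Fin n => k ≤ (i : ℕ)),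
          ∑ x ∈ Finset.univ.filter (fun x : F2 n => x i = 0), ‖psiN n x‖ ^ 2 :=
        sum_le_sum_sum_filter_of_forall_exists (fun _ => by positivity) hcover
    _ ≤ ∑ i ∈ Finset.univ.filter (fun i : Fin n => k ≤ (i : ℕ)), (1 / 2) ^ ((i : ℕ) + 1) * W :=
        Finset.sum_le_sum fun i _ => hbit i
    _ ≤ (1 / 2) ^ k * W := by
        rw [← Finset.sum_mul]
        gcongr
        exact sum_half_pow_succ_filter_le k n

theorem psiN_ne_zero (n : ℕ) : psiN n ≠ 0 :=
  fun h => pow_ne_zero _ two_ne_zero (congrFun h 0)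

/-- For every `δ > 0` there is a constant `C` (depending only on `δ`) such that for
every `n ≥ 1` the explicit product state `ψ_n` satisfies `χ_δ(ψ_n) ≤ C`. -/
theorem psiN_approxStabRank_bounded (δ : ℝ) (hδ : 0 < δ) :
    ∃ C : ℕ, ∀ n : ℕ, 1 ≤ n → approxStabRank δ (psiN n) ≤ C := by
  obtain ⟨k, hk⟩ : ∃ k : ℕ, (1 / 2 : ℝ) ^ k < δ ^ 2 / (4 + δ ^ 2) :=
    exists_pow_lt_of_lt_one (by positivity) (by norm_num)
  have hε : (1 / 2 : ℝ) ^ k * (4 + δ ^ 2) < δ ^ 2 := (lt_div_iff₀ (by positivity)).mp hk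
  refine ⟨2 ^ k, fun n _ => ?_⟩
  calc approxStabRank δ (psiN n)
      ≤ stabRank ((highBitsOne k n : Set (F2 n)).indicator (psiN n)) :=
        approxStabRank_le_stabRank_indicator hδ (psiN_ne_zero n) _
          (sum_norm_sq_psiN_compl_highBitsOne_le k n) hε
    _ ≤ (highBitsOne k n).card := stabRank_indicator_le_card _ _
    _ ≤ 2 ^ k := card_highBitsOne_le k n

end StabPaper
end
end

section
/- For every positive integer n there exists a single set of χ_n stabilizer state vectors σ₁,…,σ_{χ_n} : 𝔽₂ⁿ → ℂ whose ℂ-linear span contains the entire symmetric subspace Sⁿ(ℂ²) (in particular, ψ^{⊗n} lies in this span for every ψ ∈ ℂ²). Similarly, there exists a single set of χ_nℝ real stabilizer state vectors whose ℂ-linear span contains Sⁿ(ℂ²). -/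
open scoped BigOperators Classical

noncomputable section

/-!
Every symmetric function of `x ∈ 𝔽₂ⁿ` is a function of the Hamming weight `|x| ≤ n`, and
`(e₀ + t e₁)^{⊗n}` is `x ↦ t^{|x|}`; by Vandermonde, the tensor powers for any `n + 1` distinct
values of `t` span `Sⁿ(ℂ²)`. Each `(e₀ + t e₁)^{⊗n}` lies in the span of some `χ_n`-tuple of
stabilizer states, and there are only finitely many such tuples, so one tuple serves infinitely
many `t`, hence spans `Sⁿ(ℂ²)`. The real case is the same argument.
-/

open Function Submodule
open scoped Matrix

theorem exists_sum_mul_pow_eq {K : Type*} [Field K] {m : ℕ} {t : Fin m → K}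
    (ht : Injective t) (g : Fin m → K) :
    ∃ c : Fin m → K, ∀ w : Fin m, ∑ j, c j * t j ^ (w : ℕ) = g w := by
  have hunit : IsUnit (Matrix.vandermonde t)ᵀ := by
    rw [Matrix.isUnit_iff_isUnit_det, Matrix.det_transpose, isUnit_iff_ne_zero]
    exact Matrix.det_vandermonde_ne_zero_iff.mpr ht
  obtain ⟨c, hc⟩ := Matrix.mulVec_surjective_iff_isUnit.mpr hunit g
  refine ⟨c, fun w => ?_⟩
  rw [← hc]
  simp only [Matrix.mulVec, dotProduct, Matrix.transpose_apply, Matrix.vandermonde_apply, mul_comm]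

theorem exists_perm_comp_eq_of_hammingNorm_eq {ι : Type*} [Fintype ι] [DecidableEq ι]
    {x y : ι → ZMod 2} (h : hammingNorm x = hammingNorm y) :
    ∃ π : Equiv.Perm ι, x ∘ π = y := by
  have hcard : Fintype.card {i // y i ≠ 0} = Fintype.card {i // x i ≠ 0} := by
    simpa only [hammingNorm, Fintype.card_subtype] using h.symm
  obtain ⟨e⟩ := Fintype.card_eq.mp hcard
  have eq_of_ne_zero_iff : ∀ a b : ZMod 2, (a ≠ 0 ↔ b ≠ 0) → a = b := by decide
  refine ⟨e.extendSubtype, funext fun i => eq_of_ne_zero_iff _ _ ?_⟩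
  by_cases hi : y i ≠ 0
  · exact iff_of_true (e.extendSubtype_mem i hi) hi
  · exact iff_of_false (e.extendSubtype_not_mem i hi) hi

namespace StabPaper

variable {n : ℕ}

def IsPermInvariant (f : F2 n → ℂ) : Prop :=
  ∀ (π : Equiv.Perm (Fin n)) (x : F2 n), f (x ∘ π) = f x

theorem IsPermInvariant.eq_of_hammingNorm_eq {f : F2 n → ℂ} (hf : IsPermInvariant f)
    {x y : F2 n} (h : hammingNorm x = hammingNorm y) : f x = f y := by
  obtain ⟨π, rfl⟩ := exists_perm_comp_eq_of_hammingNorm_eq h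
  exact (hf π x).symm

theorem qubit_one_ne_zero (t : ℂ) : qubit 1 t ≠ 0 := fun h => by
  simpa [qubit] using congrFun h 0

theorem tensorPow_qubit_one (t : ℂ) (x : F2 n) :
    tensorPow (qubit 1 t) n x = t ^ hammingNorm x := by
  simp [tensorPow, qubit, Finset.prod_ite, hammingNorm]

theorem IsPermInvariant.mem_span_tensorPow_qubit {f : F2 n → ℂ} (hf : IsPermInvariant f)
    {t : Fin (n + 1) → ℂ} (ht : Injective t) :
    f ∈ span ℂ (Set.range fun j => tensorPow (qubit 1 (t j)) n) := by
  obtain ⟨c, hc⟩ := exists_sum_mul_pow_eq ht fun w => f (invFun hammingNorm (w : ℕ))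
  refine (mem_span_range_iff_exists_fun ℂ).mpr ⟨c, funext fun x => ?_⟩
  have hx : hammingNorm x < n + 1 :=
    Nat.lt_succ_of_le (hammingNorm_le_card_fintype.trans_eq (Fintype.card_fin n))
  simp only [Finset.sum_apply, Pi.smul_apply, smul_eq_mul, tensorPow_qubit_one]
  rw [hc ⟨_, hx⟩]
  exact hf.eq_of_hammingNorm_eq (invFun_eq ⟨x, rfl⟩)

/-- `stabRank` and `realStabRank` are `decompRank IsStabilizerState` and
`decompRank IsRealStabilizerState`. -/
def decompRank (P : (F2 n → ℂ) → Prop) (ψ : F2 n → ℂ) : ℕ :=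
  sInf {r : ℕ | ∃ (c : Fin r → ℂ) (σ : Fin r → (F2 n → ℂ)),
    (∀ i, P (σ i)) ∧ ψ = ∑ i, c i • σ i}

def genDecompRank (n : ℕ) (P : (F2 n → ℂ) → Prop) : ℕ :=
  sSup {r : ℕ | ∃ ψ : ZMod 2 → ℂ, ψ ≠ 0 ∧ decompRank P (tensorPow ψ n) = r}

section Dictionary

variable {P : (F2 n → ℂ) → Prop}

theorem exists_decomp_card (hP : ∀ a, P (Pi.single a 1)) (ψ : F2 n → ℂ) :
    ∃ (c : Fin (Fintype.card (F2 n)) → ℂ) (σ : Fin (Fintype.card (F2 n)) → (F2 n → ℂ)),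
      (∀ i, P (σ i)) ∧ ψ = ∑ i, c i • σ i := by
  let e := (Fintype.equivFin (F2 n)).symm
  refine ⟨fun i => ψ (e i), fun i => Pi.single (e i) 1, fun i => hP _, ?_⟩
  rw [Fintype.sum_equiv e _ (fun a => ψ a • Pi.single a 1) fun _ => rfl]
  funext x
  simp [Finset.sum_apply, Pi.single_apply]

theorem decompRank_le_card (hP : ∀ a, P (Pi.single a 1)) (ψ : F2 n → ℂ) :
    decompRank P ψ ≤ Fintype.card (F2 n) :=
  Nat.sInf_le (exists_decomp_card hP ψ)

theorem exists_decomp_decompRank (hP : ∀ a, P (Pi.single a 1)) (ψ : F2 n → ℂ) :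
    ∃ (c : Fin (decompRank P ψ) → ℂ) (σ : Fin (decompRank P ψ) → (F2 n → ℂ)),
      (∀ i, P (σ i)) ∧ ψ = ∑ i, c i • σ i :=
  Nat.sInf_mem (s := {r | ∃ (c : Fin r → ℂ) (σ : Fin r → (F2 n → ℂ)),
    (∀ i, P (σ i)) ∧ ψ = ∑ i, c i • σ i}) ⟨_, exists_decomp_card hP ψ⟩

theorem decompRank_tensorPow_le_genDecompRank (hP : ∀ a, P (Pi.single a 1))
    {ψ : ZMod 2 → ℂ} (hψ : ψ ≠ 0) :
    decompRank P (tensorPow ψ n) ≤ genDecompRank n P := by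
  refine le_csSup ⟨Fintype.card (F2 n), ?_⟩ ⟨ψ, hψ, rfl⟩
  rintro _ ⟨φ, -, rfl⟩
  exact decompRank_le_card hP _

theorem exists_tuple_range_subset_of_le {α : Type*} {Q : α → Prop} {a : α} (ha : Q a)
    {r R : ℕ} (hr : r ≤ R) {σ : Fin r → α} (hσ : ∀ i, Q (σ i)) :
    ∃ σ' : Fin R → α, (∀ i, Q (σ' i)) ∧ Set.range σ ⊆ Set.range σ' := by
  refine ⟨fun i => if h : (i : ℕ) < r then σ ⟨i, h⟩ else a, fun i => ?_, ?_⟩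
  · dsimp only
    split
    · exact hσ _
    · exact ha
  · rintro _ ⟨i, rfl⟩
    exact ⟨Fin.castLE hr i, by simp⟩

theorem exists_tuple_tensorPow_mem_span (hP : ∀ a, P (Pi.single a 1))
    {ψ : ZMod 2 → ℂ} (hψ : ψ ≠ 0) :
    ∃ σ : Fin (genDecompRank n P) → {φ // P φ},
      tensorPow ψ n ∈ span ℂ (Set.range fun i => (σ i).1) := by
  obtain ⟨c, σ, hσ, hdecomp⟩ := exists_decomp_decompRank hP (tensorPow ψ n)
  obtain ⟨σ', hσ', hsub⟩ := exists_tuple_range_subset_of_le (hP 0)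
    (decompRank_tensorPow_le_genDecompRank hP hψ) hσ
  refine ⟨fun i => ⟨σ' i, hσ' i⟩, ?_⟩
  rw [hdecomp]
  exact sum_mem fun i _ => smul_mem _ _ (subset_span (hsub ⟨i, rfl⟩))

theorem exists_tuple_span_of_isPermInvariant (hP : ∀ a, P (Pi.single a 1))
    (hfin : {φ | P φ}.Finite) :
    ∃ σ : Fin (genDecompRank n P) → (F2 n → ℂ), (∀ i, P (σ i)) ∧
      ∀ f : F2 n → ℂ, IsPermInvariant f → f ∈ span ℂ (Set.range σ) := by
  have : Finite {φ // P φ} := hfin.to_subtype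
  choose τ hτ using fun t : ℂ => exists_tuple_tensorPow_mem_span hP (qubit_one_ne_zero t)
  -- pigeonhole: finitely many tuples, infinitely many `t`
  obtain ⟨σ, hσ⟩ := Finite.exists_infinite_fiber τ
  let t : Fin (n + 1) → ℂ := fun j => (Infinite.natEmbedding (τ ⁻¹' {σ}) j).1
  have ht : Injective t :=
    Subtype.val_injective.comp ((Infinite.natEmbedding _).injective.comp Fin.val_injective)
  refine ⟨fun i => (σ i).1, fun i => (σ i).2, fun f hf =>
    span_le.mpr ?_ (hf.mem_span_tensorPow_qubit ht)⟩
  rintro _ ⟨j, rfl⟩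
  have hτt : τ (t j) = σ := (Infinite.natEmbedding (τ ⁻¹' {σ}) j).2
  exact hτt ▸ hτ (t j)

end Dictionary

theorem isAffineSubspace_singleton (a : F2 n) : IsAffineSubspace {a} := by
  refine ⟨Set.singleton_nonempty a, ?_⟩
  intro x hx y hy z hz
  rw [Set.mem_singleton_iff.mp hx, Set.mem_singleton_iff.mp hy, Set.mem_singleton_iff.mp hz,
    Set.mem_singleton_iff, (funext fun i => CharTwo.add_self_eq_zero (a i) : a + a = 0), zero_add]

theorem isRealStabilizerState_single (a : F2 n) : IsRealStabilizerState (Pi.single a 1) :=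
  ⟨{a}, 0, isAffineSubspace_singleton a, ⟨rfl, fun _ _ _ => by simp⟩,
    fun x => by simp [Pi.single_apply]⟩

theorem IsRealStabilizerState.isStabilizerState {σ : F2 n → ℂ} (hσ : IsRealStabilizerState σ) :
    IsStabilizerState σ := by
  obtain ⟨A, q, hA, hq, hσ⟩ := hσ
  exact ⟨A, 0, q, hA, fun _ _ => by simp, hq, by simpa using hσ⟩

theorem finite_setOf_isStabilizerState : {σ : F2 n → ℂ | IsStabilizerState σ}.Finite := by
  refine (Set.finite_range fun Alq : Set (F2 n) × (F2 n → ZMod 2) × (F2 n → ZMod 2) =>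
    fun x => if x ∈ Alq.1 then Complex.I ^ (Alq.2.1 x).val * (-1 : ℂ) ^ (Alq.2.2 x).val
      else 0).subset ?_
  rintro σ ⟨A, l, q, -, -, -, hσ⟩
  exact ⟨(A, l, q), (funext hσ).symm⟩

theorem finite_setOf_isRealStabilizerState :
    {σ : F2 n → ℂ | IsRealStabilizerState σ}.Finite :=
  finite_setOf_isStabilizerState.subset fun _ => IsRealStabilizerState.isStabilizerState

theorem stab_states_spanning_symmetric_subspace_general (n : ℕ) :
    (∃ σ : Fin (genStabRank n) → (F2 n → ℂ),
      (∀ i, IsStabilizerState (σ i)) ∧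
      ∀ f : F2 n → ℂ, (∀ (π : Equiv.Perm (Fin n)) (x : F2 n), f (x ∘ π) = f x) →
        f ∈ Submodule.span ℂ (Set.range σ)) ∧
    (∃ σ : Fin (genRealStabRank n) → (F2 n → ℂ),
      (∀ i, IsRealStabilizerState (σ i)) ∧
      ∀ f : F2 n → ℂ, (∀ (π : Equiv.Perm (Fin n)) (x : F2 n), f (x ∘ π) = f x) →
        f ∈ Submodule.span ℂ (Set.range σ)) :=
  ⟨exists_tuple_span_of_isPermInvariant
      (fun a => (isRealStabilizerState_single a).isStabilizerState) finite_setOf_isStabilizerState,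
    exists_tuple_span_of_isPermInvariant isRealStabilizerState_single
      finite_setOf_isRealStabilizerState⟩

/-- For every `n ≥ 1` there is a single set of `χ_n` stabilizer state vectors whose span
contains the symmetric subspace `Sⁿ(ℂ²)` (all permutation-invariant functions), and a
single set of `χ_nℝ` real stabilizer state vectors whose span contains `Sⁿ(ℂ²)`. -/
theorem stab_states_spanning_symmetric_subspace (n : ℕ) (hn : 1 ≤ n) :
    (∃ σ : Fin (genStabRank n) → (F2 n → ℂ),
      (∀ i, IsStabilizerState (σ i)) ∧
      ∀ f : F2 n → ℂ, (∀ (π : Equiv.Perm (Fin n)) (x : F2 n), f (x ∘ π) = f x) →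
        f ∈ Submodule.span ℂ (Set.range σ)) ∧
    (∃ σ : Fin (genRealStabRank n) → (F2 n → ℂ),
      (∀ i, IsRealStabilizerState (σ i)) ∧
      ∀ f : F2 n → ℂ, (∀ (π : Equiv.Perm (Fin n)) (x : F2 n), f (x ∘ π) = f x) →
        f ∈ Submodule.span ℂ (Set.range σ)) :=
  stab_states_spanning_symmetric_subspace_general n

end StabPaper
end
end
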